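/- arXiv:2509.14509 — 7 statements merged into one kernel-verified Lean document; each statement's English description precedes it below -/
import Mathlib

section
/- For every real q ∈ (0,1] and every real w with 1 ≤ w and q·w ≤ 1, one has (1−q)^w ≤ 1 − c·q·w, where c = 1 − 1/e and e is Euler's number. -/
/-- **Binomial linear bound.** For `q ∈ (0,1]` and real `w` with `1 ≤ w` and `q·w ≤ 1`,
one has `(1-q)^w ≤ 1 - c·q·w` where `c = 1 - 1/e`. Here `(1-q)^w` is the real power
(`rpow`) with nonnegative base. -/
theorem binomial_linear_bound (q w : ℝ) (hq0 : 0 < q) (hq1 : q ≤ 1)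
    (hw : 1 ≤ w) (hqw : q * w ≤ 1) :
    (1 - q) ^ w ≤ 1 - (1 - 1 / Real.exp 1) * q * w := by
  have hx0 : 0 ≤ q * w := le_of_lt (mul_pos hq0 (lt_of_lt_of_le one_pos hw))
  have h1 : (1 - q) ^ w ≤ Real.exp (-(q * w)) := by
    have hb : 1 - q ≤ Real.exp (-q) := by linarith [Real.add_one_le_exp (-q)]
    calc (1 - q) ^ w ≤ (Real.exp (-q)) ^ w :=
          Real.rpow_le_rpow (by linarith) hb (by linarith)
      _ = Real.exp (-(q * w)) := by rw [← Real.exp_mul]; ring_nf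
  have h2 : Real.exp (-(q * w)) ≤ 1 - (1 - 1 / Real.exp 1) * (q * w) := by
    have hcv := convexOn_exp.2 (Set.mem_univ (0:ℝ)) (Set.mem_univ (-1))
      (by linarith : (0:ℝ) ≤ 1 - q * w) hx0 (by ring)
    simp only [smul_eq_mul] at hcv
    have he : (1 - q * w) * 0 + q * w * (-1) = -(q * w) := by ring
    rw [he, Real.exp_zero] at hcv
    have hi : Real.exp (-1) = 1 / Real.exp 1 := by
      rw [Real.exp_neg]; ring
    rw [hi] at hcv
    linarith
  calc (1 - q) ^ w ≤ Real.exp (-(q * w)) := h1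
    _ ≤ 1 - (1 - 1 / Real.exp 1) * (q * w) := h2
    _ = 1 - (1 - 1 / Real.exp 1) * q * w := by ring
end

section
/- Let p ≥ 3 be an integer and δ ∈ (0,1/2) a real number. Define x := (1/2 − δ)·((1−δ)^{p−1} − δ^{p−1})/((1−δ)^p + δ^p) and ψ := p − 1 + log₂((1−δ)^p + δ^p) − (p/2)·H₂(x) − p·x·log₂(1−2δ). Then ψ ≤ (4/ln 2)·(1−2x)^{(p−1)/2} + (p/2)·H₂(x) − 1. -/
/-!
Write `a = 1 - δ`, `b = δ`, `ρ = b / a`, `H` for the binary entropy in nats and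
`y = (a - b) / (2a) = (1 - ρ) / 2`. After multiplying by `log 2` the claim reads
`p (log 2a - H(x) - x log(a - b)) + (log(a^p + b^p) - p log a) ≤ 4 (1 - 2x)^((p-1)/2)`.
The first bracket vanishes at `x = y`, so concavity of `H` bounds it by
`(y - x) · log((1 - x)(a - b) / x)`, and both factors are of order `b^(p-1)`:
`y - x = (a - b) b^(p-1) / (2a(a^p + b^p))`, while the argument of the logarithm is
`(a^(p-1) + b^(p-1)) / (a^(p-1) - b^(p-1))`. Hence the first term is at most `3ρ^p`; the second
is `log(1 + ρ^p) ≤ ρ^p`. Finally `ρ = 1 - 2y ≤ 1 - 2x` and `ρ < 1`, so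
`ρ^p ≤ (1 - 2x)^((p-1)/2)`.
-/

noncomputable def binEntropy2 (x : ℝ) : ℝ :=
  -x * Real.logb 2 x - (1 - x) * Real.logb 2 (1 - x)

open Real Finset

lemma mul_sub_mul_pow_le_pow_sub_pow {R : Type*} [CommRing R] [LinearOrder R]
    [IsStrictOrderedRing R] {a b : R} (hb : 0 ≤ b) (hba : b ≤ a) (n : ℕ) :
    (n + 1) * (a - b) * b ^ n ≤ a ^ (n + 1) - b ^ (n + 1) := by
  have hterm : ∀ i ∈ range (n + 1), b ^ n ≤ a ^ i * b ^ (n + 1 - 1 - i) := fun i hi => by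
    calc b ^ n = b ^ i * b ^ (n + 1 - 1 - i) := by
          rw [← pow_add]; congr 1; simp only [mem_range] at hi; omega
      _ ≤ a ^ i * b ^ (n + 1 - 1 - i) := by gcongr
  have hterms := card_nsmul_le_sum _ _ _ hterm
  rw [card_range, nsmul_eq_mul, Nat.cast_add_one] at hterms
  rw [← geom_sum₂_mul, mul_right_comm]
  exact mul_le_mul_of_nonneg_right hterms (sub_nonneg.2 hba)

lemma binEntropy_sub_binEntropy_le {x y : ℝ} (hx : 0 < x) (hxy : x < y) (hy : y ≤ 1) :
    binEntropy y - binEntropy x ≤ (y - x) * (log (1 - x) - log x) := by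
  have h := strictConcave_binEntropy.concaveOn.slope_le_of_hasDerivAt
    ⟨hx.le, by linarith⟩ ⟨by linarith, hy⟩ hxy (hasDerivAt_binEntropy hx.ne' (by linarith))
  rw [slope_def_field, div_le_iff₀ (sub_pos.2 hxy)] at h
  linarith

lemma log_pow_add_pow_le {a b : ℝ} (ha : 0 < a) (hb : 0 ≤ b) (m : ℕ) :
    log (a ^ m + b ^ m) ≤ m * log a + (b / a) ^ m := by
  have hsplit : a ^ m + b ^ m = a ^ m * (1 + (b / a) ^ m) := by
    rw [div_pow, mul_add, mul_one, mul_div_cancel₀ _ (pow_pos ha m).ne']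
  have hpos : 0 < 1 + (b / a) ^ m := by positivity
  rw [hsplit, log_mul (by positivity) hpos.ne', log_pow]
  linarith [log_le_sub_one_of_pos hpos]

lemma binEntropy2_eq_binEntropy_div (x : ℝ) : binEntropy2 x = binEntropy x / log 2 := by
  simp only [binEntropy2, binEntropy, logb, log_inv]
  ring

lemma pow_le_rpow_of_le_of_le_one {r t e : ℝ} (hr : 0 < r) (hr1 : r ≤ 1) (hrt : r ≤ t)
    {m : ℕ} (he : 0 ≤ e) (hem : e ≤ m) : r ^ m ≤ t ^ e := by
  rw [← rpow_natCast]
  exact (rpow_le_rpow_of_exponent_ge hr hr1 hem).trans (rpow_le_rpow hr.le hrt he)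

/-- The `x` of the theorem, for `a = 1 - δ`, `b = δ` and `p = n + 2`. -/
noncomputable def tiltPoint (a b : ℝ) (n : ℕ) : ℝ :=
  (a - b) * (a ^ (n + 1) - b ^ (n + 1)) / (2 * (a ^ (n + 2) + b ^ (n + 2)))

section
variable {a b : ℝ}

lemma binEntropy_sub_div_two_mul (hb : 0 < b) (hba : b < a) (hsum : a + b = 1) :
    binEntropy ((a - b) / (2 * a)) = log (2 * a) - (a - b) / (2 * a) * log (a - b) := by
  have ha : 0 < a := hb.trans hba
  have hlog_one_sub : log (1 - (a - b) / (2 * a))⁻¹ = log (2 * a) := by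
    rw [show 1 - (a - b) / (2 * a) = (2 * a)⁻¹ by field_simp; linarith, inv_inv]
  rw [binEntropy, hlog_one_sub, inv_div, log_div (by positivity) (sub_pos.2 hba).ne']
  ring

variable (n : ℕ)

lemma pow_sub_pow_pos (hb : 0 < b) (hba : b < a) : 0 < a ^ (n + 1) - b ^ (n + 1) :=
  sub_pos.2 (pow_lt_pow_left₀ hba hb.le (Nat.succ_ne_zero n))

lemma tiltPoint_pos (hb : 0 < b) (hba : b < a) : 0 < tiltPoint a b n :=
  have ha : 0 < a := hb.trans hba
  div_pos (mul_pos (sub_pos.2 hba) (pow_sub_pow_pos n hb hba)) (by positivity)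

lemma sub_tiltPoint (hb : 0 < b) (hba : b < a) (hsum : a + b = 1) :
    (a - b) / (2 * a) - tiltPoint a b n =
      (a - b) * b ^ (n + 1) / (2 * a * (a ^ (n + 2) + b ^ (n + 2))) := by
  have ha : 0 < a := hb.trans hba
  unfold tiltPoint
  field_simp
  linear_combination (a - b) * b ^ (n + 1) * hsum

lemma one_sub_tiltPoint_div_mul (hb : 0 < b) (hba : b < a) (hsum : a + b = 1) :
    (1 - tiltPoint a b n) / tiltPoint a b n * (a - b) =
      (a ^ (n + 1) + b ^ (n + 1)) / (a ^ (n + 1) - b ^ (n + 1)) := by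
  have ha : 0 < a := hb.trans hba
  have hD := pow_sub_pow_pos n hb hba
  have hab := (sub_pos.2 hba).ne'
  unfold tiltPoint
  field_simp
  linear_combination (a ^ (n + 1) + b ^ (n + 1)) * hsum

lemma sub_tiltPoint_mul_le (hb : 0 < b) (hba : b < a) (hsum : a + b = 1) :
    ((a - b) / (2 * a) - tiltPoint a b n) * (2 * b ^ (n + 1) / (a ^ (n + 1) - b ^ (n + 1)))
      ≤ (b / a) ^ (n + 2) / (a * (n + 1)) := by
  have ha : 0 < a := hb.trans hba
  have hD := pow_sub_pow_pos n hb hba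
  rw [sub_tiltPoint n hb hba hsum]
  calc (a - b) * b ^ (n + 1) / (2 * a * (a ^ (n + 2) + b ^ (n + 2))) *
        (2 * b ^ (n + 1) / (a ^ (n + 1) - b ^ (n + 1)))
      = b ^ (n + 2) * ((n + 1) * (a - b) * b ^ n) /
          ((n + 1) * a * (a ^ (n + 2) + b ^ (n + 2)) * (a ^ (n + 1) - b ^ (n + 1))) := by
        field_simp; ring
    _ ≤ b ^ (n + 2) * (a ^ (n + 1) - b ^ (n + 1)) /
          ((n + 1) * a * a ^ (n + 2) * (a ^ (n + 1) - b ^ (n + 1))) := by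
        gcongr
        · exact mul_sub_mul_pow_le_pow_sub_pow hb.le hba.le n
        · exact le_add_of_nonneg_right (by positivity)
    _ = (b / a) ^ (n + 2) / (a * (n + 1)) := by
        rw [div_pow]; field_simp

lemma log_two_mul_sub_binEntropy_tiltPoint_le (hb : 0 < b) (hba : b < a) (hsum : a + b = 1) :
    log (2 * a) - binEntropy (tiltPoint a b n) - tiltPoint a b n * log (a - b)
      ≤ (b / a) ^ (n + 2) / (a * (n + 1)) := by
  set x := tiltPoint a b n
  set y := (a - b) / (2 * a)
  have ha : 0 < a := hb.trans hba
  have hx := tiltPoint_pos n hb hba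
  have hD := pow_sub_pow_pos n hb hba
  have hyx : 0 < y - x := by
    rw [sub_tiltPoint n hb hba hsum]; have := sub_pos.2 hba; positivity
  have hy1 : y ≤ 1 := by rw [div_le_one (by positivity)]; linarith
  have h1x : 0 < 1 - x := by linarith
  have hlog : log (1 - x) - log x + log (a - b) ≤
      2 * b ^ (n + 1) / (a ^ (n + 1) - b ^ (n + 1)) := by
    rw [← log_div h1x.ne' hx.ne', ← log_mul (by positivity) (sub_pos.2 hba).ne',
      one_sub_tiltPoint_div_mul n hb hba hsum]
    calc _ ≤ (a ^ (n + 1) + b ^ (n + 1)) / (a ^ (n + 1) - b ^ (n + 1)) - 1 :=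
          log_le_sub_one_of_pos (by positivity)
      _ = _ := by field_simp; ring
  calc log (2 * a) - binEntropy x - x * log (a - b)
      = binEntropy y - binEntropy x + (y - x) * log (a - b) := by
        rw [binEntropy_sub_div_two_mul hb hba hsum]; ring
    _ ≤ (y - x) * (log (1 - x) - log x + log (a - b)) := by
        linarith [binEntropy_sub_binEntropy_le hx (sub_pos.1 hyx) hy1]
    _ ≤ (y - x) * (2 * b ^ (n + 1) / (a ^ (n + 1) - b ^ (n + 1))) := by gcongr
    _ ≤ _ := sub_tiltPoint_mul_le n hb hba hsum

lemma log_add_sub_binEntropy_tiltPoint_le (hb : 0 < b) (hba : b < a) (hsum : a + b = 1)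
    (hn : 1 ≤ n) :
    (n + 2) * log 2 + log (a ^ (n + 2) + b ^ (n + 2)) - (n + 2) * binEntropy (tiltPoint a b n)
      - (n + 2) * tiltPoint a b n * log (a - b) ≤ 4 * (b / a) ^ (n + 2) := by
  have ha : 0 < a := hb.trans hba
  have hletter := log_two_mul_sub_binEntropy_tiltPoint_le n hb hba hsum
  have hlogS := log_pow_add_pow_le ha hb.le (n + 2)
  have hcoef : (n + 2 : ℝ) / (a * (n + 1)) ≤ 3 := by
    have hn' : (1 : ℝ) ≤ n := by exact_mod_cast hn
    rw [div_le_iff₀ (by positivity)]; nlinarith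
  have hscaled : (n + 2 : ℝ) * ((b / a) ^ (n + 2) / (a * (n + 1))) ≤ 3 * (b / a) ^ (n + 2) := by
    rw [mul_div_assoc', mul_div_right_comm]; gcongr
  have hletter' := mul_le_mul_of_nonneg_left hletter (by positivity : (0 : ℝ) ≤ n + 2)
  rw [log_mul two_ne_zero ha.ne'] at hletter'
  push_cast at hlogS
  linarith

lemma div_le_one_sub_two_mul_tiltPoint (hb : 0 < b) (hba : b < a) (hsum : a + b = 1) :
    b / a ≤ 1 - 2 * tiltPoint a b n := by
  have ha : 0 < a := hb.trans hba
  have hgap : 0 ≤ (a - b) / (2 * a) - tiltPoint a b n := by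
    rw [sub_tiltPoint n hb hba hsum]; have := sub_pos.2 hba; positivity
  have hρ : b / a = 1 - 2 * ((a - b) / (2 * a)) := by field_simp; ring
  linarith

end

/-- **Bound on ψ.** For an integer `p ≥ 3` and `δ ∈ (0,1/2)`, with
`x := (1/2 - δ)·((1-δ)^{p-1} - δ^{p-1})/((1-δ)^p + δ^p)` and
`ψ := p - 1 + log₂((1-δ)^p + δ^p) - (p/2)·H₂(x) - p·x·log₂(1-2δ)`, one has
`ψ ≤ (4/ln 2)·(1-2x)^{(p-1)/2} + (p/2)·H₂(x) - 1`. -/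
theorem psi_bound (p : ℕ) (hp : 3 ≤ p) (δ : ℝ) (hδ : δ ∈ Set.Ioo (0 : ℝ) (1 / 2)) :
    let x : ℝ := (1 / 2 - δ) * ((1 - δ) ^ (p - 1) - δ ^ (p - 1)) / ((1 - δ) ^ p + δ ^ p)
    let ψ : ℝ := (p : ℝ) - 1 + Real.logb 2 ((1 - δ) ^ p + δ ^ p)
      - ((p : ℝ) / 2) * binEntropy2 x - (p : ℝ) * x * Real.logb 2 (1 - 2 * δ)
    ψ ≤ (4 / Real.log 2) * (1 - 2 * x) ^ (((p : ℝ) - 1) / 2)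
      + ((p : ℝ) / 2) * binEntropy2 x - 1 := by
  obtain ⟨n, rfl⟩ : ∃ n, p = n + 2 := ⟨p - 2, by omega⟩
  obtain ⟨hδ0, hδ2⟩ := hδ
  intro x ψ
  have hx : x = tiltPoint (1 - δ) δ n := by
    simp only [x, tiltPoint, show n + 2 - 1 = n + 1 by omega]
    field_simp; ring
  have hba : δ < 1 - δ := by linarith
  have ha : 0 < 1 - δ := by linarith
  have hsum : 1 - δ + δ = 1 := by ring
  have hG := log_add_sub_binEntropy_tiltPoint_le n hδ0 hba hsum (by omega)
  rw [← hx, show 1 - δ - δ = 1 - 2 * δ by ring] at hG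
  have hpow : (δ / (1 - δ)) ^ (n + 2) ≤ (1 - 2 * x) ^ ((((n + 2 : ℕ) : ℝ) - 1) / 2) := by
    refine pow_le_rpow_of_le_of_le_one (by positivity) ((div_le_one (by linarith)).2 hba.le)
      (hx ▸ div_le_one_sub_two_mul_tiltPoint n hδ0 hba hsum) ?_ ?_ <;>
      push_cast <;> linarith
  have hψ : ψ = ((n + 2) * log 2 + log ((1 - δ) ^ (n + 2) + δ ^ (n + 2))
      - (n + 2) * binEntropy x - (n + 2) * x * log (1 - 2 * δ)) / log 2
      + ((n + 2 : ℕ) / 2) * binEntropy2 x - 1 := by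
    simp only [ψ, binEntropy2_eq_binEntropy_div, logb]
    field_simp
    push_cast
    ring
  rw [hψ]
  gcongr ?_ + _ - _
  rw [div_mul_eq_mul_div]
  gcongr
  linarith
end

section
/- Let k ≥ 1 be a natural number, let ε ∈ (0,1) and c ∈ (0,1) be reals, and let x : Fin k → ℝ satisfy 0 ≤ x i ≤ 1 for all i and ∑_{i} x i ≤ (1−ε)·k. Then there exists a subset I ⊆ Fin k with |I| = ⌊c·k⌋ such that x i ≤ (1−ε)/(1−c) for all i ∈ I. -/
/-! By Markov's inequality at most `(1 - ε) k / t = (1 - c) k` coordinates exceed the threshold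
`t = (1 - ε) / (1 - c)`, so at least `c k` coordinates lie below it; take any `⌊c k⌋` of them. -/

open Finset

lemma card_filter_lt_mul_le_sum {ι : Type*} (s : Finset ι) {f : ι → ℝ}
    (hf : ∀ i ∈ s, 0 ≤ f i) (t : ℝ) : #{i ∈ s | t < f i} * t ≤ ∑ i ∈ s, f i :=
  calc #{i ∈ s | t < f i} * t ≤ ∑ i ∈ s with t < f i, f i := by
        simpa using card_nsmul_le_sum _ f t fun i hi => (mem_filter.mp hi).2.le
    _ ≤ ∑ i ∈ s, f i :=
        sum_le_sum_of_subset_of_nonneg (filter_subset _ s) fun i hi _ => hf i hi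

lemma card_sub_sum_div_le_card_filter_le {ι : Type*} [Fintype ι] {f : ι → ℝ}
    (hf : ∀ i, 0 ≤ f i) {t : ℝ} (ht : 0 < t) :
    (Fintype.card ι : ℝ) - (∑ i, f i) / t ≤ #{i | f i ≤ t} := by
  have hsplit : #{i | f i ≤ t} + #{i | ¬f i ≤ t} = Fintype.card ι :=
    card_filter_add_card_filter_not _
  have hlarge : (#{i | t < f i} : ℝ) ≤ (∑ i, f i) / t :=
    (le_div_iff₀ ht).mpr (card_filter_lt_mul_le_sum univ (fun i _ => hf i) t)
  simp only [not_le] at hsplit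
  rw [← hsplit, Nat.cast_add]
  linarith

theorem exists_index_set_general (k : ℕ) (ε c : ℝ)
    (hε : ε ∈ Set.Ioo (0 : ℝ) 1) (hc : c ∈ Set.Ioo (0 : ℝ) 1)
    (x : Fin k → ℝ) (hx : ∀ i, 0 ≤ x i ∧ x i ≤ 1)
    (hsum : ∑ i, x i ≤ (1 - ε) * k) :
    ∃ I : Finset (Fin k), I.card = ⌊c * (k : ℝ)⌋₊ ∧ ∀ i ∈ I, x i ≤ (1 - ε) / (1 - c) := by
  set t := (1 - ε) / (1 - c)
  have hc1 : 0 < 1 - c := sub_pos.mpr hc.2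
  have hε1 : 0 < 1 - ε := sub_pos.mpr hε.2
  have ht : 0 < t := div_pos hε1 hc1
  have hlarge : (∑ i, x i) / t ≤ (1 - c) * k := by
    calc (∑ i, x i) / t ≤ (1 - ε) * k / t := by gcongr
      _ = (1 - c) * k := by simp only [t]; field_simp
  have hsmall : c * k ≤ #{i | x i ≤ t} := by
    have := card_sub_sum_div_le_card_filter_le (fun i => (hx i).1) ht
    rw [Fintype.card_fin] at this
    linarith
  obtain ⟨I, hIsmall, hIcard⟩ := exists_subset_card_eq (Nat.floor_le_of_le hsmall)
  exact ⟨I, hIcard, fun i hi => (mem_filter.mp (hIsmall hi)).2⟩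

/-- **Existence of the index set ℐ.** Let `k ≥ 1`, `ε, c ∈ (0,1)`, and `x : Fin k → ℝ`
with `0 ≤ x i ≤ 1` for all `i` and `∑ i, x i ≤ (1-ε)·k`. Then there is a subset
`I ⊆ Fin k` with `|I| = ⌊c·k⌋` such that `x i ≤ (1-ε)/(1-c)` for all `i ∈ I`. -/
theorem exists_index_set (k : ℕ) (hk : 1 ≤ k) (ε c : ℝ)
    (hε : ε ∈ Set.Ioo (0 : ℝ) 1) (hc : c ∈ Set.Ioo (0 : ℝ) 1)
    (x : Fin k → ℝ) (hx : ∀ i, 0 ≤ x i ∧ x i ≤ 1)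
    (hsum : ∑ i, x i ≤ (1 - ε) * k) :
    ∃ I : Finset (Fin k), I.card = ⌊c * (k : ℝ)⌋₊ ∧ ∀ i ∈ I, x i ≤ (1 - ε) / (1 - c) :=
  exists_index_set_general k ε c hε hc x hx hsum
end

section
/- Fix natural numbers N, m and Δ ≤ m, and a real p ∈ [0,1]. Under the probability measure on matrices H ∈ (ZMod 2)^{N×m} in which each entry is independently equal to 1 with probability p and 0 with probability 1−p, the probability that there exists a nonzero vector e ∈ (ZMod 2)^m with Hamming weight wt(e) ≤ Δ and H·e = 0 is at most ∑_{w=1}^{Δ} C(m,w) · ((1 + (1−2p)^w)/2)^N. -/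
open scoped Classical

/-- The Hamming weight of a vector over `ZMod 2`: the number of coordinates equal to `1`. -/
def hwt {m : ℕ} (v : Fin m → ZMod 2) : ℕ :=
  (Finset.univ.filter fun i => v i = 1).card

/-! Union bound over the nonzero `e` with `wt(e) ≤ Δ`. For a fixed `e` of weight `w` the rows of
`H` are independent, and a row `h` has `h ⬝ e = 0` exactly when a sum of `w` independent
Bernoulli(p) bits vanishes in `ZMod 2`. Writing the indicator of `x = 0` as `(1 + (-1)^x) / 2` and
using `E[(-1)^bit] = 1 - 2p`, this has probability `(1 + (1 - 2p)^w) / 2`. Finally there are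
`C(m, w)` vectors of weight `w`. -/

open Finset Matrix

lemma sum_filter_exists_le_sum_sum {α β M : Type*} [Fintype α] [Fintype β]
    [AddCommMonoid M] [PartialOrder M] [IsOrderedAddMonoid M]
    (Q : β → Prop) (P : α → β → Prop) [DecidablePred Q] [∀ a b, Decidable (P a b)]
    [DecidablePred fun a => ∃ b, Q b ∧ P a b] (μ : α → M) (hμ : ∀ a, 0 ≤ μ a) :
    ∑ a ∈ univ.filter (fun a => ∃ b, Q b ∧ P a b), μ a
      ≤ ∑ b ∈ univ.filter Q, ∑ a ∈ univ.filter (P · b), μ a :=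
  calc ∑ a ∈ univ.filter (fun a => ∃ b, Q b ∧ P a b), μ a
      ≤ ∑ a ∈ univ.filter (fun a => ∃ b, Q b ∧ P a b),
          ∑ b ∈ univ.filter (fun b => Q b ∧ P a b), μ a := by
        refine sum_le_sum fun a ha => ?_
        obtain ⟨b, hb⟩ := (mem_filter.1 ha).2
        exact single_le_sum (f := fun _ => μ a) (fun _ _ => hμ a) (mem_filter.2 ⟨mem_univ b, hb⟩)
    _ ≤ ∑ a, ∑ b ∈ univ.filter (fun b => Q b ∧ P a b), μ a :=
        sum_le_sum_of_subset_of_nonneg (filter_subset _ _)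
          fun a _ _ => sum_nonneg fun _ _ => hμ a
    _ = ∑ b ∈ univ.filter Q, ∑ a ∈ univ.filter (P · b), μ a :=
        sum_comm' (by simp [and_comm])

lemma AddChar.map_sum_eq_prod {A M ι : Type*} [AddCommMonoid A] [CommMonoid M]
    (ψ : AddChar A M) (s : Finset ι) (f : ι → A) : ψ (∑ i ∈ s, f i) = ∏ i ∈ s, ψ (f i) := by
  induction s using Finset.cons_induction with
  | empty => simp
  | cons a s ha ih => rw [sum_cons, prod_cons, map_add_eq_mul, ih]

namespace ZMod

lemma eq_zero_or_eq_one (x : ZMod 2) : x = 0 ∨ x = 1 := by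
  decide +revert

lemma sum_univ_two {M : Type*} [AddCommMonoid M] (f : ZMod 2 → M) : ∑ x, f x = f 0 + f 1 :=
  Fin.sum_univ_two f

end ZMod

noncomputable def parityChar : AddChar (ZMod 2) ℝ := AddChar.zmodChar 2 (ζ := -1) (by norm_num)

@[simp] lemma parityChar_one : parityChar 1 = -1 := by
  simp [parityChar, AddChar.zmodChar_apply, ZMod.val_one]

lemma ite_eq_zero_eq_parityChar (x : ZMod 2) :
    (if x = 0 then 1 else 0 : ℝ) = (1 + parityChar x) / 2 := by
  obtain rfl | rfl := ZMod.eq_zero_or_eq_one x <;> norm_num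

noncomputable def bernoulliWeight (p : ℝ) (x : ZMod 2) : ℝ := if x = 1 then p else 1 - p

lemma bernoulliWeight_nonneg {p : ℝ} (hp : p ∈ Set.Icc (0 : ℝ) 1) (x : ZMod 2) :
    0 ≤ bernoulliWeight p x := by
  unfold bernoulliWeight
  split_ifs <;> linarith [hp.1, hp.2]

section bernoulli

variable {ι κ : Type*} [Fintype ι] [DecidableEq ι] [Fintype κ] (p : ℝ)

lemma sum_prod_bernoulliWeight : ∑ h : ι → ZMod 2, ∏ j, bernoulliWeight p (h j) = 1 := by
  rw [← Fintype.prod_sum (fun (_ : ι) x => bernoulliWeight p x)]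
  simp [ZMod.sum_univ_two, bernoulliWeight]

lemma sum_bernoulliWeight_mul_parityChar (c : ZMod 2) :
    ∑ x, bernoulliWeight p x * parityChar (x * c) = if c = 1 then 1 - 2 * p else 1 := by
  obtain rfl | rfl := ZMod.eq_zero_or_eq_one c
  · simp [ZMod.sum_univ_two, bernoulliWeight]
  · simp [ZMod.sum_univ_two, bernoulliWeight]
    ring

lemma sum_prod_bernoulliWeight_mul_parityChar_dotProduct (e : ι → ZMod 2) :
    ∑ h : ι → ZMod 2, (∏ j, bernoulliWeight p (h j)) * parityChar (h ⬝ᵥ e)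
      = (1 - 2 * p) ^ #{j | e j = 1} :=
  calc _ = ∑ h : ι → ZMod 2, ∏ j, bernoulliWeight p (h j) * parityChar (h j * e j) := by
          simp only [dotProduct, AddChar.map_sum_eq_prod, prod_mul_distrib]
    _ = ∏ j, ∑ x, bernoulliWeight p x * parityChar (x * e j) :=
          (Fintype.prod_sum fun j x => bernoulliWeight p x * parityChar (x * e j)).symm
    _ = (1 - 2 * p) ^ #{j | e j = 1} := by
          simp only [sum_bernoulliWeight_mul_parityChar, ← prod_filter, prod_const]

lemma sum_filter_dotProduct_eq_zero_prod_bernoulliWeight (e : ι → ZMod 2) :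
    ∑ h ∈ univ.filter (fun h : ι → ZMod 2 => h ⬝ᵥ e = 0), ∏ j, bernoulliWeight p (h j)
      = (1 + (1 - 2 * p) ^ #{j | e j = 1}) / 2 :=
  calc _ = ∑ h : ι → ZMod 2,
        (∏ j, bernoulliWeight p (h j)) * ((1 + parityChar (h ⬝ᵥ e)) / 2) := by
          simp only [sum_filter, ← ite_eq_zero_eq_parityChar, mul_boole]
    _ = (∑ h : ι → ZMod 2, ∏ j, bernoulliWeight p (h j)
          + ∑ h : ι → ZMod 2, (∏ j, bernoulliWeight p (h j)) * parityChar (h ⬝ᵥ e)) / 2 := by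
          rw [← sum_add_distrib, sum_div]
          exact sum_congr rfl fun h _ => by ring
    _ = (1 + (1 - 2 * p) ^ #{j | e j = 1}) / 2 := by
          rw [sum_prod_bernoulliWeight, sum_prod_bernoulliWeight_mul_parityChar_dotProduct]

-- `[DecidableEq κ]` makes the `Fintype (Matrix κ ι _)` instance agree with the one found for
-- concrete index types rather than being the classical one.
lemma sum_filter_mulVec_eq_zero_prod_bernoulliWeight [DecidableEq κ] (e : ι → ZMod 2) :
    ∑ H ∈ univ.filter (fun H : Matrix κ ι (ZMod 2) => H *ᵥ e = 0),
        ∏ i, ∏ j, bernoulliWeight p (H i j)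
      = ((1 + (1 - 2 * p) ^ #{j | e j = 1}) / 2) ^ Fintype.card κ :=
  calc _ = ∑ H : κ → ι → ZMod 2,
        ∏ i, if H i ⬝ᵥ e = 0 then ∏ j, bernoulliWeight p (H i j) else 0 := by
          rw [sum_filter]
          refine sum_congr rfl fun H _ => ?_
          simp only [prod_ite_zero, mem_univ, true_imp_iff, funext_iff, mulVec, Pi.zero_apply]
    _ = ∏ i : κ, ∑ h : ι → ZMod 2, if h ⬝ᵥ e = 0 then ∏ j, bernoulliWeight p (h j) else 0 :=
          (Fintype.prod_sum fun _ h => if h ⬝ᵥ e = 0 then ∏ j, bernoulliWeight p (h j) else 0).symm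
    _ = _ := by
          simp only [← sum_filter, sum_filter_dotProduct_eq_zero_prod_bernoulliWeight, prod_const,
            card_univ]

end bernoulli

section hammingWeight

variable {m : ℕ}

lemma hwt_eq_zero_iff {e : Fin m → ZMod 2} : hwt e = 0 ↔ e = 0 := by
  simp only [hwt, card_eq_zero, filter_eq_empty_iff, mem_univ, true_imp_iff, funext_iff,
    Pi.zero_apply]
  refine forall_congr' fun j => ?_
  obtain h | h := ZMod.eq_zero_or_eq_one (e j) <;> simp [h]

lemma card_filter_hwt_eq (w : ℕ) : #{e : Fin m → ZMod 2 | hwt e = w} = m.choose w :=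
  calc _ = #(powersetCard w (univ : Finset (Fin m))) := by
        refine card_nbij' (fun e => ({j | e j = 1} : Finset (Fin m)))
          (fun S j => if j ∈ S then 1 else 0) ?_ ?_ ?_ ?_
        · intro e he
          simpa [mem_powersetCard, hwt] using (mem_filter.1 (mem_coe.1 he)).2
        · intro S hS
          simp only [mem_coe, mem_powersetCard] at hS
          simp [hwt, ← hS.2]
        · intro e _
          funext j
          obtain h | h := ZMod.eq_zero_or_eq_one (e j) <;> simp [h]
        · intro S _
          ext j
          by_cases hj : j ∈ S <;> simp [hj]
    _ = m.choose w := by simp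

lemma sum_filter_ne_zero_hwt_le {M : Type*} [AddCommMonoid M] (Δ : ℕ) (f : ℕ → M) :
    ∑ e ∈ univ.filter (fun e : Fin m → ZMod 2 => e ≠ 0 ∧ hwt e ≤ Δ), f (hwt e)
      = ∑ w ∈ Icc 1 Δ, m.choose w • f w := by
  rw [← sum_fiberwise_of_maps_to (g := hwt) (t := Icc 1 Δ)]
  · refine sum_congr rfl fun w hw => ?_
    rw [sum_congr rfl fun e he => by rw [(mem_filter.1 he).2], sum_const, filter_filter,
      ← card_filter_hwt_eq]
    congr 2
    ext e
    simp only [mem_filter, mem_univ, true_and, Ne, ← hwt_eq_zero_iff]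
    have := mem_Icc.1 hw
    omega
  · intro e he
    simp only [mem_filter, mem_univ, true_and, Ne, ← hwt_eq_zero_iff] at he
    exact mem_Icc.2 ⟨by omega, he.2⟩

end hammingWeight

theorem bernoulli_code_distance_general (N m Δ : ℕ) (p : ℝ)
    (hp : p ∈ Set.Icc (0 : ℝ) 1) :
    ∑ H ∈ Finset.univ.filter (fun H : Matrix (Fin N) (Fin m) (ZMod 2) =>
        ∃ e : Fin m → ZMod 2, e ≠ 0 ∧ hwt e ≤ Δ ∧ H.mulVec e = 0),
        ∏ i : Fin N, ∏ j : Fin m, (if H i j = 1 then p else 1 - p)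
      ≤ ∑ w ∈ Finset.Icc 1 Δ, (m.choose w : ℝ) * ((1 + (1 - 2 * p) ^ w) / 2) ^ N := by
  simp only [← and_assoc]
  calc _ ≤ ∑ e ∈ univ.filter (fun e : Fin m → ZMod 2 => e ≠ 0 ∧ hwt e ≤ Δ),
          ∑ H ∈ univ.filter (fun H : Matrix (Fin N) (Fin m) (ZMod 2) => H *ᵥ e = 0),
            ∏ i, ∏ j, bernoulliWeight p (H i j) :=
        sum_filter_exists_le_sum_sum _ _ _ fun H =>
          prod_nonneg fun i _ => prod_nonneg fun j _ => bernoulliWeight_nonneg hp _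
    _ = ∑ e ∈ univ.filter (fun e : Fin m → ZMod 2 => e ≠ 0 ∧ hwt e ≤ Δ),
          ((1 + (1 - 2 * p) ^ hwt e) / 2) ^ N :=
        sum_congr rfl fun e _ => (sum_filter_mulVec_eq_zero_prod_bernoulliWeight p e).trans
          (by rw [Fintype.card_fin]; rfl)
    _ = _ := (sum_filter_ne_zero_hwt_le Δ fun w => ((1 + (1 - 2 * p) ^ w) / 2) ^ N).trans
          (by simp only [nsmul_eq_mul])

/-- **Union bound for low-weight codewords of a Bernoulli random code.**
For `Δ ≤ m` and `p ∈ [0,1]`, under the product Bernoulli(p) measure on matrices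
`H ∈ (ZMod 2)^{N×m}`, the probability that there exists a nonzero `e ∈ (ZMod 2)^m`
with `wt(e) ≤ Δ` and `H·e = 0` is at most
`∑_{w=1}^{Δ} C(m,w) · ((1 + (1-2p)^w)/2)^N`. -/
theorem bernoulli_code_distance (N m Δ : ℕ) (hΔ : Δ ≤ m) (p : ℝ)
    (hp : p ∈ Set.Icc (0 : ℝ) 1) :
    ∑ H ∈ Finset.univ.filter (fun H : Matrix (Fin N) (Fin m) (ZMod 2) =>
        ∃ e : Fin m → ZMod 2, e ≠ 0 ∧ hwt e ≤ Δ ∧ H.mulVec e = 0),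
        ∏ i : Fin N, ∏ j : Fin m, (if H i j = 1 then p else 1 - p)
      ≤ ∑ w ∈ Finset.Icc 1 Δ, (m.choose w : ℝ) * ((1 + (1 - 2 * p) ^ w) / 2) ^ N :=
  bernoulli_code_distance_general N m Δ p hp
end

section
/- Let m ≥ 2 and N ≤ m be natural numbers, let C ≥ 4 be a real number, and set p := C·(ln m)/m; assume p ≤ 1. Under the probability measure on matrices H ∈ (ZMod 2)^{N×m} in which each entry is independently 1 with probability p and 0 with probability 1−p, the probability that some row i has weight ∑_{j} H_{ij} ≥ (1 + 2/√C)·C·ln m (the sum taken over the integers, counting entries equal to 1) is at most m^{−1/3}. -/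
open scoped Classical

open Finset Real

lemma aux_factor {α β : Type*} [Fintype α] [Fintype β] [DecidableEq α] (g : α → β → ℝ) :
    ∑ v : α → β, ∏ a, g a (v a) = ∏ a, ∑ b, g a b := by
  rw [Finset.prod_univ_sum, Fintype.piFinset_univ]

lemma row_mgf (p s : ℝ) (m : ℕ) :
    ∑ v : Fin m → ZMod 2, (∏ j, (if v j = 1 then p else 1-p)) *
      Real.exp (s * ((Finset.univ.filter fun j => v j = 1).card : ℝ))
    = ((1-p) + p * Real.exp s)^m := by
  have h1 : ∀ v : Fin m → ZMod 2,
      (∏ j, (if v j = 1 then p else 1-p)) *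
        Real.exp (s * ((Finset.univ.filter fun j => v j = 1).card : ℝ))
      = ∏ j, (if v j = 1 then p * Real.exp s else (1-p)) := by
    intro v
    have hc : ((Finset.univ.filter fun j => v j = 1).card : ℝ)
        = ∑ j : Fin m, (if v j = 1 then (1:ℝ) else 0) := by
      rw [Finset.card_filter]; push_cast
      simp [apply_ite]
    rw [hc, Finset.mul_sum, Real.exp_sum, ← Finset.prod_mul_distrib]
    refine Finset.prod_congr rfl fun j _ => ?_
    by_cases h : v j = 1 <;> simp [h]
  simp_rw [h1]
  rw [aux_factor (fun _ x => if x = 1 then p * Real.exp s else (1-p))]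
  rw [Finset.prod_const, Finset.card_univ, Fintype.card_fin]
  congr 1
  rw [show ∑ b : ZMod 2, (if b = 1 then p * Real.exp s else (1-p))
      = (if (0:ZMod 2) = 1 then p * Real.exp s else (1-p)) + (if (1:ZMod 2) = 1 then p * Real.exp s else (1-p)) from Fin.sum_univ_two _]
  norm_num

lemma row_chernoff (p s t : ℝ) (m : ℕ) (hp0 : 0 ≤ p) (hp1 : p ≤ 1) (hs : 0 ≤ s) :
    ∑ v ∈ Finset.univ.filter (fun v : Fin m → ZMod 2 =>
        t ≤ ((Finset.univ.filter fun j => v j = 1).card : ℝ)),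
      ∏ j, (if v j = 1 then p else 1-p)
    ≤ Real.exp (m * p * (Real.exp s - 1) - s * t) := by
  have hμ : ∀ v : Fin m → ZMod 2, 0 ≤ ∏ j, (if v j = 1 then p else 1-p) := by
    intro v; apply Finset.prod_nonneg; intro j _
    by_cases h : v j = 1 <;> simp [h] <;> linarith
  have step1 : ∑ v ∈ Finset.univ.filter (fun v : Fin m → ZMod 2 =>
        t ≤ ((Finset.univ.filter fun j => v j = 1).card : ℝ)),
      ∏ j, (if v j = 1 then p else 1-p)
      ≤ ∑ v : Fin m → ZMod 2, (∏ j, (if v j = 1 then p else 1-p)) *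
        Real.exp (s * ((Finset.univ.filter fun j => v j = 1).card : ℝ) - s * t) := by
    refine le_trans (Finset.sum_le_sum ?_) (Finset.sum_le_sum_of_subset_of_nonneg (Finset.filter_subset _ _) ?_)
    · intro v hv
      rw [Finset.mem_filter] at hv
      nth_rewrite 1 [← mul_one (∏ j, (if v j = 1 then p else 1-p))]
      apply mul_le_mul_of_nonneg_left _ (hμ v)
      rw [← Real.exp_zero]
      apply Real.exp_le_exp.2
      have := hv.2
      nlinarith [hv.2]
    · intro v _ _
      exact mul_nonneg (hμ v) (Real.exp_nonneg _)
  have step2 : ∑ v : Fin m → ZMod 2, (∏ j, (if v j = 1 then p else 1-p)) *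
        Real.exp (s * ((Finset.univ.filter fun j => v j = 1).card : ℝ) - s * t)
      = ((1-p) + p * Real.exp s)^m * Real.exp (- (s*t)) := by
    simp_rw [Real.exp_sub, ← mul_div_assoc, Real.exp_neg, div_eq_mul_inv]
    rw [← Finset.sum_mul, row_mgf]
  have step3 : ((1-p) + p * Real.exp s)^m ≤ Real.exp (m * p * (Real.exp s - 1)) := by
    have hb : (1-p) + p * Real.exp s = 1 + p * (Real.exp s - 1) := by ring
    have he : (1:ℝ) ≤ Real.exp s := by
      rw [← Real.exp_zero]; exact Real.exp_le_exp.2 hs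
    have h0 : 0 ≤ p * (Real.exp s - 1) := mul_nonneg hp0 (by linarith)
    calc ((1-p) + p * Real.exp s)^m ≤ (Real.exp (p * (Real.exp s - 1)))^m := by
          apply pow_le_pow_left₀ (by linarith) (by rw [hb, add_comm]; exact Real.add_one_le_exp _)
      _ = Real.exp (m * (p * (Real.exp s - 1))) := by rw [← Real.exp_nat_mul]
      _ = Real.exp (m * p * (Real.exp s - 1)) := by ring_nf
  calc _ ≤ _ := step1
    _ = _ := step2
    _ ≤ Real.exp (m * p * (Real.exp s - 1)) * Real.exp (-(s*t)) := by
        apply mul_le_mul_of_nonneg_right step3 (Real.exp_nonneg _)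
    _ = Real.exp (m * p * (Real.exp s - 1) - s * t) := by rw [← Real.exp_add]; ring_nf

lemma exp_poly_bound {s : ℝ} (h0 : 0 ≤ s) (h1 : s ≤ 1) :
    Real.exp s ≤ 1 + s + s^2/2 + s^3/6 + 5*s^4/96 := by
  have hb := Real.exp_bound (x := s) (by rw [abs_of_nonneg h0]; exact h1) (n := 4) (by norm_num)
  have hsum : ∑ i ∈ Finset.range 4, s ^ i / (i.factorial : ℝ) = 1 + s + s^2/2 + s^3/6 := by
    simp [Finset.sum_range_succ, Nat.factorial]
  rw [hsum, abs_of_nonneg h0] at hb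
  norm_num [Nat.factorial] at hb
  have := abs_le.1 hb
  nlinarith [this.2, pow_nonneg h0 4]

lemma exponent_bound {δ : ℝ} (h0 : 0 < δ) (h1 : δ ≤ 1) :
    Real.exp ((7/10)*δ) - 1 - (7/10)*δ*(1+δ) ≤ -δ^2/3 := by
  have hs0 : (0:ℝ) ≤ (7/10)*δ := by linarith
  have hs1 : (7/10)*δ ≤ 1 := by linarith
  have hb := exp_poly_bound hs0 hs1
  nlinarith [pow_pos h0 2, pow_pos h0 3, pow_pos h0 4, sq_nonneg δ, mul_pos h0 h0,
    mul_le_of_le_one_right (le_of_lt (pow_pos h0 2)) h1,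
    mul_le_of_le_one_right (le_of_lt (pow_pos h0 3)) h1]

lemma marginal (p : ℝ) {N m : ℕ} (i : Fin N) (Q : (Fin m → ZMod 2) → Prop) :
    ∑ H : Fin N → Fin m → ZMod 2,
        (if Q (H i) then ∏ i', ∏ j, (if H i' j = 1 then p else 1-p) else 0)
    = ∑ v : Fin m → ZMod 2, (if Q v then ∏ j, (if v j = 1 then p else 1-p) else 0) := by
  classical
  set μrow := fun v : Fin m → ZMod 2 => ∏ j, (if v j = 1 then p else 1-p) with hμrow
  have hmass : ∑ v : Fin m → ZMod 2, μrow v = 1 := by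
    have := row_mgf p 0 m
    simpa using this
  set g := fun (i' : Fin N) (v : Fin m → ZMod 2) =>
    if i' = i then (if Q v then μrow v else 0) else μrow v with hg
  have h1 : ∀ H : Fin N → Fin m → ZMod 2,
      (if Q (H i) then ∏ i', μrow (H i') else 0) = ∏ i', g i' (H i') := by
    intro H
    by_cases hQ : Q (H i)
    · rw [if_pos hQ]
      refine Finset.prod_congr rfl fun i' _ => ?_
      by_cases hii : i' = i
      · subst hii; simp [hg, hQ]
      · simp [hg, hii]
    · rw [if_neg hQ]
      refine (Finset.prod_eq_zero (Finset.mem_univ i) ?_).symm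
      simp [hg, hQ]
  calc ∑ H : Fin N → Fin m → ZMod 2,
        (if Q (H i) then ∏ i', ∏ j, (if H i' j = 1 then p else 1-p) else 0)
      = ∑ H : Fin N → Fin m → ZMod 2, ∏ i', g i' (H i') := by
        exact Finset.sum_congr rfl fun H _ => h1 H
    _ = ∏ i', ∑ v : Fin m → ZMod 2, g i' v := aux_factor g
    _ = (∑ v : Fin m → ZMod 2, (if Q v then μrow v else 0)) *
          ∏ i' ∈ Finset.univ.erase i, ∑ v : Fin m → ZMod 2, g i' v := by
        rw [← Finset.mul_prod_erase Finset.univ _ (Finset.mem_univ i)]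
        simp [hg]
    _ = ∑ v : Fin m → ZMod 2, (if Q v then μrow v else 0) := by
        rw [Finset.prod_congr rfl (fun i' hi' => ?_), Finset.prod_const_one, mul_one]
        rw [Finset.mem_erase] at hi'
        simp only [hg, if_neg hi'.1]
        exact hmass

/-- **Row weight bound for the Bernoulli ensemble.** Let `m ≥ 2`, `N ≤ m`, `C ≥ 4`, and
`p = C·(ln m)/m ≤ 1`. Under the product Bernoulli(p) measure on matrices
`H ∈ (ZMod 2)^{N×m}`, the probability that some row has weight at least
`(1 + 2/√C)·C·ln m` is at most `m^{-1/3}`. -/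
theorem bernoulli_row_weight_bound (m N : ℕ) (hm : 2 ≤ m) (hN : N ≤ m)
    (C : ℝ) (hC : 4 ≤ C) (p : ℝ) (hp : p = C * Real.log m / m) (hp1 : p ≤ 1) :
    ∑ H ∈ Finset.univ.filter (fun H : Matrix (Fin N) (Fin m) (ZMod 2) =>
        ∃ i : Fin N,
          (1 + 2 / Real.sqrt C) * C * Real.log m
            ≤ ((Finset.univ.filter fun j : Fin m => H i j = 1).card : ℝ)),
        ∏ i : Fin N, ∏ j : Fin m, (if H i j = 1 then p else 1 - p)
      ≤ (m : ℝ) ^ (-(1 / 3) : ℝ) := by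
  have hm1 : (1:ℝ) < m := by exact_mod_cast lt_of_lt_of_le one_lt_two (by exact_mod_cast hm)
  have hm0 : (0:ℝ) < m := by linarith
  have hlog : 0 < Real.log m := Real.log_pos hm1
  have hC0 : (0:ℝ) < C := by linarith
  have hsC : 2 ≤ Real.sqrt C := by
    have : Real.sqrt 4 ≤ Real.sqrt C := Real.sqrt_le_sqrt hC
    rwa [show (4:ℝ) = 2^2 by norm_num, Real.sqrt_sq (by norm_num : (0:ℝ) ≤ 2)] at this
  have hsC0 : (0:ℝ) < Real.sqrt C := by linarith
  set δ : ℝ := 2 / Real.sqrt C with hδ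
  have hδ0 : 0 < δ := by positivity
  have hδ1 : δ ≤ 1 := by rw [hδ, div_le_one hsC0]; linarith
  have hδsq : δ^2 * C = 4 := by
    rw [hδ, div_pow, Real.sq_sqrt hC0.le]
    field_simp
    norm_num
  have hp0 : 0 ≤ p := by rw [hp]; positivity
  set s : ℝ := (7/10) * δ with hs
  have hs0 : 0 ≤ s := by positivity
  set t : ℝ := (1 + 2 / Real.sqrt C) * C * Real.log m with ht
  have hmp : (m:ℝ) * p = C * Real.log m := by
    rw [hp]; field_simp
  -- single row bound
  have hrow : ∑ v ∈ Finset.univ.filter (fun v : Fin m → ZMod 2 =>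
        t ≤ ((Finset.univ.filter fun j => v j = 1).card : ℝ)),
      ∏ j, (if v j = 1 then p else 1-p) ≤ (m:ℝ) ^ (-(4/3) : ℝ) := by
    refine le_trans (row_chernoff p s t m hp0 hp1 hs0) ?_
    have hexp : (m:ℝ) * p * (Real.exp s - 1) - s * t
        = (C * Real.log m) * (Real.exp s - 1 - s * (1 + δ)) := by
      rw [hmp, ht, hδ]; ring
    rw [hexp]
    have hb := exponent_bound hδ0 hδ1
    have h2 : (C * Real.log m) * (Real.exp s - 1 - s * (1 + δ))
        ≤ (C * Real.log m) * (-δ^2/3) := by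
      apply mul_le_mul_of_nonneg_left _ (by positivity)
      rw [hs]; exact hb
    have h3 : (C * Real.log m) * (-δ^2/3) = -(4/3) * Real.log m := by
      have : δ^2 * C = 4 := hδsq
      nlinarith [this]
    rw [Real.rpow_def_of_pos hm0]
    apply Real.exp_le_exp.2
    rw [h3] at h2
    calc _ ≤ -(4/3) * Real.log m := h2
      _ = Real.log m * (-(4/3)) := by ring
  -- union bound
  set Q : Fin N → (Fin N → Fin m → ZMod 2) → Prop := fun i H =>
    t ≤ ((Finset.univ.filter fun j : Fin m => H i j = 1).card : ℝ) with hQ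
  set μ : (Fin N → Fin m → ZMod 2) → ℝ := fun H => ∏ i, ∏ j, (if H i j = 1 then p else 1-p) with hμ
  have hind : ∀ (i : Fin N) (H : Fin N → Fin m → ZMod 2), 0 ≤ (if Q i H then μ H else 0) := by
    intro i H
    by_cases h : Q i H <;> simp only [h, if_pos, if_neg, if_true, if_false, le_refl]
    · apply Finset.prod_nonneg; intro i' _; apply Finset.prod_nonneg; intro j _
      by_cases h2 : H i' j = 1 <;> simp [h2] <;> linarith
  have hμ0 : ∀ H, 0 ≤ μ H := by
    intro H; apply Finset.prod_nonneg; intro i _; apply Finset.prod_nonneg; intro j _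
    by_cases h : H i j = 1 <;> simp [h] <;> linarith
  calc ∑ H ∈ Finset.univ.filter (fun H : Matrix (Fin N) (Fin m) (ZMod 2) =>
        ∃ i : Fin N, t ≤ ((Finset.univ.filter fun j : Fin m => H i j = 1).card : ℝ)), μ H
      ≤ ∑ H ∈ Finset.univ.filter (fun H : Matrix (Fin N) (Fin m) (ZMod 2) =>
        ∃ i : Fin N, t ≤ ((Finset.univ.filter fun j : Fin m => H i j = 1).card : ℝ)),
          ∑ i : Fin N, (if Q i H then μ H else 0) := by
        refine Finset.sum_le_sum fun H hH => ?_
        rw [Finset.mem_filter] at hH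
        obtain ⟨i0, hi0⟩ := hH.2
        refine le_trans (le_of_eq (if_pos hi0).symm)
          (Finset.single_le_sum (f := fun i => if Q i H then μ H else 0)
            (fun i _ => hind i H) (Finset.mem_univ i0))
    _ ≤ ∑ H : Matrix (Fin N) (Fin m) (ZMod 2), ∑ i : Fin N, (if Q i H then μ H else 0) := by
        refine Finset.sum_le_sum_of_subset_of_nonneg (Finset.filter_subset _ _) fun H _ _ => ?_
        exact Finset.sum_nonneg fun i _ => hind i H
    _ = ∑ i : Fin N, ∑ H : Matrix (Fin N) (Fin m) (ZMod 2), (if Q i H then μ H else 0) :=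
        Finset.sum_comm
    _ ≤ ∑ i : Fin N, (m:ℝ) ^ (-(4/3) : ℝ) := by
        refine Finset.sum_le_sum fun i _ => ?_
        have hmarg := marginal p i (fun v : Fin m → ZMod 2 =>
          t ≤ ((Finset.univ.filter fun j => v j = 1).card : ℝ))
        calc ∑ H : Matrix (Fin N) (Fin m) (ZMod 2), (if Q i H then μ H else 0)
            = ∑ v : Fin m → ZMod 2,
              (if t ≤ ((Finset.univ.filter fun j => v j = 1).card : ℝ)
                then ∏ j, (if v j = 1 then p else 1-p) else 0) := hmarg
          _ = ∑ v ∈ Finset.univ.filter (fun v : Fin m → ZMod 2 =>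
                t ≤ ((Finset.univ.filter fun j => v j = 1).card : ℝ)),
              ∏ j, (if v j = 1 then p else 1-p) := (Finset.sum_filter _ _).symm
          _ ≤ (m:ℝ) ^ (-(4/3) : ℝ) := hrow
    _ = (N:ℝ) * (m:ℝ) ^ (-(4/3) : ℝ) := by
        rw [Finset.sum_const, Finset.card_univ, Fintype.card_fin, nsmul_eq_mul]
    _ ≤ (m:ℝ) * (m:ℝ) ^ (-(4/3) : ℝ) := by
        apply mul_le_mul_of_nonneg_right _ (Real.rpow_nonneg hm0.le _)
        exact_mod_cast hN
    _ = (m : ℝ) ^ (-(1 / 3) : ℝ) := by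
        nth_rewrite 1 [← Real.rpow_one (m:ℝ)]
        rw [← Real.rpow_add hm0]
        norm_num
end

section
/- Let k, b ≥ 1 be natural numbers and n = k·b. Identify coordinates of (ZMod 2)^n with pairs (i,j), i ∈ Fin k, j ∈ Fin b. For z, z' ∈ (ZMod 2)^n let wᵢ(z,z') denote the number of j ∈ Fin b with z(i,j) ≠ z'(i,j), define the k-minimum Hamming semimetric d_k(z,z') := ∑_{i=1}^{k} min(wᵢ(z,z'), b − wᵢ(z,z')), and let d_H(z,z') := ∑_{i=1}^{k} wᵢ(z,z') be the Hamming distance. Then for all z, z', z'' ∈ (ZMod 2)^n: d_k(z,z') ≤ d_k(z,z'') + d_H(z',z''). -/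
open scoped Classical

/-- The block Hamming weight: the number of positions `j` in block `i` where `u` and `v`
differ. Coordinates of `(ZMod 2)^{k·b}` are identified with pairs `(i, j)`. -/
def blockDist {k b : ℕ} (u v : Fin k × Fin b → ZMod 2) (i : Fin k) : ℕ :=
  (Finset.univ.filter fun j : Fin b => u (i, j) ≠ v (i, j)).card

/-- The `k`-minimum Hamming semimetric: over each of the `k` blocks, sum the minimum of
the block Hamming distance and its complement. -/
def dkMin {k b : ℕ} (u v : Fin k × Fin b → ZMod 2) : ℕ :=
  ∑ i : Fin k, min (blockDist u v i) (b - blockDist u v i)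

/-- The Hamming distance, written as a sum of block Hamming distances. -/
def dHam {k b : ℕ} (u v : Fin k × Fin b → ZMod 2) : ℕ :=
  ∑ i : Fin k, blockDist u v i

lemma blockDist_le {k b : ℕ} (u v : Fin k × Fin b → ZMod 2) (i : Fin k) :
    blockDist u v i ≤ b := by
  calc blockDist u v i ≤ (Finset.univ : Finset (Fin b)).card := Finset.card_filter_le _ _
  _ = b := by simp

lemma blockDist_triangle {k b : ℕ} (u v w : Fin k × Fin b → ZMod 2) (i : Fin k) :
    blockDist u v i ≤ blockDist u w i + blockDist w v i := by
  unfold blockDist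
  refine le_trans (Finset.card_le_card ?_) (Finset.card_union_le _ _)
  intro j hj
  simp only [Finset.mem_filter, Finset.mem_union, Finset.mem_univ, true_and] at *
  by_contra h
  push_neg at h
  exact hj (h.1.trans h.2)

lemma blockDist_comm {k b : ℕ} (u v : Fin k × Fin b → ZMod 2) (i : Fin k) :
    blockDist u v i = blockDist v u i := by
  unfold blockDist
  congr 1
  ext j
  simp [ne_comm]

/-- **Weak triangle inequality for the `k`-minimum Hamming semimetric.** For all
`z, z', z'' ∈ (ZMod 2)^{k·b}`: `d_k(z,z') ≤ d_k(z,z'') + d_H(z',z'')`. -/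
theorem dkMin_weak_triangle (k b : ℕ) (hk : 1 ≤ k) (hb : 1 ≤ b)
    (z z' z'' : Fin k × Fin b → ZMod 2) :
    dkMin z z' ≤ dkMin z z'' + dHam z' z'' := by
  unfold dkMin dHam
  rw [← Finset.sum_add_distrib]
  apply Finset.sum_le_sum
  intro i _
  have h1 := blockDist_le z z' i
  have h2 := blockDist_le z z'' i
  have h3 : blockDist z z' i ≤ blockDist z z'' i + blockDist z' z'' i := by
    have := blockDist_triangle z z' z'' i
    rwa [blockDist_comm z'' z'] at this
  have h4 : blockDist z z'' i ≤ blockDist z z' i + blockDist z' z'' i :=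
    blockDist_triangle z z'' z' i
  omega
end

section
/- Fix a real number λ > 0. For k ∈ ℕ define γ_k := √(ln(4k/π²)/(k·λ)), β_k := 1/(2√k), p_k := cos(2β_k), q_k := sin(2β_k), and c_k := cos(γ_k). Then the complex sequence A_k := (p_k + i·q_k·(c_k)^{kλ})^k converges, as k → ∞, to exp(−1/2 + i·π/2) = i·e^{−1/2}. -/
/-!
Write `A_k = (1 + g_k)^k`; then `A_k → exp w` as soon as `k g_k → w`. The real part of
`k g_k` is `k (cos (1/√k) - 1) → -1/2`. For the imaginary part, `log (cos γ) = -γ²/2 + O(γ⁴)`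
and `kλγ_k² = log (4k/π²)`, so `c_k^{kλ} = exp (-log (4k/π²)/2 + O(log² k / k)) ~ π / (2√k)`;
hence `k q_k c_k^{kλ} ~ √k c_k^{kλ} → π/2`.
-/

open Filter Topology Real

lemma tendsto_mul_sin_inv_atTop : Tendsto (fun x : ℝ => x * sin x⁻¹) atTop (𝓝 1) := by
  have h := (continuous_sinc.tendsto 0).comp tendsto_inv_atTop_zero
  rw [sinc_zero] at h
  refine h.congr' ?_
  filter_upwards [eventually_gt_atTop 0] with x hx
  rw [Function.comp_apply, sinc_of_ne_zero (inv_ne_zero hx.ne'), div_inv_eq_mul, mul_comm]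

lemma tendsto_sq_mul_cos_inv_sub_one_atTop :
    Tendsto (fun x : ℝ => x ^ 2 * (cos x⁻¹ - 1)) atTop (𝓝 (-1 / 2)) := by
  have h := ((tendsto_mul_sin_inv_atTop.comp (tendsto_id.const_mul_atTop two_pos)).pow 2).const_mul
    (-1 / 2 : ℝ)
  rw [one_pow, mul_one] at h
  refine h.congr fun x => ?_
  rw [Function.comp_apply, id, show x⁻¹ = 2 * (2 * x)⁻¹ by ring, cos_two_mul, cos_sq']
  ring

lemma abs_log_cos_add_sq_div_two_le {x : ℝ} (hx : |x| ≤ 1) :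
    |log (cos x) + x ^ 2 / 2| ≤ x ^ 4 / 2 := by
  have hcos_pos := cos_pos_of_le_one hx
  have hcos_le := cos_bound hx
  rw [pow_abs, abs_of_nonneg (by positivity : (0 : ℝ) ≤ x ^ 4)] at hcos_le
  have hcos_ge : 1 - x ^ 2 / 2 ≤ cos x := one_sub_sq_div_two_le_cos
  have hx2 : x ^ 2 ≤ 1 := by nlinarith [abs_nonneg x, sq_abs x]
  have hlog_le := log_le_sub_one_of_pos hcos_pos
  have hlog_ge := one_sub_inv_le_log_of_pos hcos_pos
  have hinv : -(x ^ 2 / 2) - x ^ 4 / 2 ≤ 1 - (cos x)⁻¹ := by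
    rw [← sub_nonneg, show 1 - (cos x)⁻¹ - (-(x ^ 2 / 2) - x ^ 4 / 2)
      = (cos x * (1 + x ^ 2 / 2 + x ^ 4 / 2) - 1) / cos x by field_simp; ring]
    apply div_nonneg _ hcos_pos.le
    nlinarith [mul_nonneg (sub_nonneg.2 hcos_ge)
        (by positivity : (0 : ℝ) ≤ 1 + x ^ 2 / 2 + x ^ 4 / 2),
      mul_nonneg (pow_nonneg (sq_nonneg x) 2) (sub_nonneg.2 hx2)]
  rw [abs_le]
  constructor <;> nlinarith [abs_le.1 hcos_le, pow_nonneg (sq_nonneg x) 2]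

lemma tendsto_cos_rpow_mul_exp_sq_div_two {ι : Type*} {l : Filter ι} {γ a : ι → ℝ}
    (hγ : Tendsto γ l (𝓝 0)) (ha : Tendsto (fun i => a i * γ i ^ 4) l (𝓝 0)) :
    Tendsto (fun i => cos (γ i) ^ a i * exp (a i * γ i ^ 2 / 2)) l (𝓝 1) := by
  have hsmall : ∀ᶠ i in l, |γ i| ≤ 1 := by
    have h := hγ.abs
    rw [abs_zero] at h
    exact h.eventually_le_const one_pos
  have hexponent : Tendsto (fun i => a i * (log (cos (γ i)) + γ i ^ 2 / 2)) l (𝓝 0) := by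
    have hbound := ha.abs.div_const 2
    rw [abs_zero, zero_div] at hbound
    refine squeeze_zero_norm' ?_ hbound
    filter_upwards [hsmall] with i hi
    rw [norm_mul, Real.norm_eq_abs, abs_mul, abs_of_nonneg (by positivity : 0 ≤ γ i ^ 4),
      mul_div_assoc]
    exact mul_le_mul_of_nonneg_left (abs_log_cos_add_sq_div_two_le hi) (abs_nonneg _)
  have h := (continuous_exp.tendsto 0).comp hexponent
  rw [exp_zero] at h
  refine h.congr' ?_
  filter_upwards [hsmall] with i hi
  rw [Function.comp_apply, rpow_def_of_pos (cos_pos_of_le_one hi), ← exp_add]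
  congr 1
  ring

lemma Complex.tendsto_ofReal_add_I_mul_pow_exp {p q : ℕ → ℝ} {a b : ℝ}
    (hp : Tendsto (fun k : ℕ => k * (p k - 1)) atTop (𝓝 a))
    (hq : Tendsto (fun k : ℕ => k * q k) atTop (𝓝 b)) :
    Tendsto (fun k : ℕ => ((p k : ℂ) + I * q k) ^ k) atTop (𝓝 (exp (a + I * b))) := by
  refine (tendsto_one_add_pow_exp_of_tendsto (g := fun k => (p k - 1 : ℂ) + I * q k) ?_).congr
    fun k => by ring
  convert (continuous_ofReal.tendsto _ |>.comp hp).add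
    ((continuous_ofReal.tendsto _ |>.comp hq).const_mul I) using 1
  ext k
  simp only [Function.comp_apply]
  push_cast
  ring

namespace QAOA

variable {lam : ℝ}

lemma tendsto_log_pow_div (hlam : 0 < lam) (n : ℕ) :
    Tendsto (fun k : ℕ => log (4 * k / π ^ 2) ^ n / (k * lam)) atTop (𝓝 0) := by
  have hy : Tendsto (fun k : ℕ => 4 * (k : ℝ) / π ^ 2) atTop atTop :=
    (tendsto_natCast_atTop_atTop.const_mul_atTop four_pos).atTop_div_const (by positivity)
  refine ((tendsto_pow_log_div_mul_add_atTop (lam * π ^ 2 / 4) 0 n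
    (by positivity)).comp hy).congr fun k => ?_
  simp only [Function.comp_apply, add_zero]
  congr 1
  field_simp

lemma tendsto_sqrt_mul_cos_gamma_rpow (hlam : 0 < lam) :
    Tendsto (fun k : ℕ => √k * cos (√(log (4 * k / π ^ 2) / (k * lam))) ^ ((k : ℝ) * lam))
      atTop (𝓝 (π / 2)) := by
  set L : ℕ → ℝ := fun k => log (4 * k / π ^ 2)
  set γ : ℕ → ℝ := fun k => √(L k / (k * lam))
  have hγ : Tendsto γ atTop (𝓝 0) := by
    have h := (continuous_sqrt.tendsto 0).comp (tendsto_log_pow_div hlam 1)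
    simp only [pow_one, sqrt_zero] at h
    exact h
  have hy : ∀ᶠ k : ℕ in atTop, 1 ≤ 4 * (k : ℝ) / π ^ 2 := by
    filter_upwards [eventually_ge_atTop 4] with k hk
    have hk' : (4 : ℝ) ≤ k := by exact_mod_cast hk
    rw [one_le_div (by positivity)]
    nlinarith [pi_pos, pi_lt_four]
  have hγ_sq : ∀ᶠ k : ℕ in atTop, k * lam * γ k ^ 2 = L k := by
    filter_upwards [hy, eventually_gt_atTop 0] with k hyk hk
    have hklam : (0 : ℝ) < k * lam := by positivity
    rw [sq_sqrt (div_nonneg (log_nonneg hyk) hklam.le), mul_div_cancel₀ _ hklam.ne']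
  have ha : Tendsto (fun k : ℕ => k * lam * γ k ^ 4) atTop (𝓝 0) := by
    refine (tendsto_log_pow_div hlam 2).congr' ?_
    filter_upwards [hγ_sq, eventually_gt_atTop 0] with k hk hk0
    have hklam : (0 : ℝ) < k * lam := by positivity
    change L k ^ 2 / _ = _
    rw [← hk]
    field_simp
  have h := (tendsto_cos_rpow_mul_exp_sq_div_two hγ ha).const_mul (π / 2)
  rw [mul_one] at h
  refine h.congr' ?_
  filter_upwards [hγ_sq, hy] with k hk hyk
  have hexp : exp (L k / 2) = 2 / π * √k := by
    rw [exp_half, exp_log (by linarith), show (4 : ℝ) * k / π ^ 2 = (2 / π) ^ 2 * k by ring,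
      sqrt_mul (sq_nonneg _), sqrt_sq (by positivity)]
  rw [hk, hexp]
  simp only [γ, L]
  field_simp

end QAOA

/-- **Limit of the depth-1 QAOA amplitude.** Fix `λ > 0`. With
`γ_k = √(ln(4k/π²)/(kλ))`, `β_k = 1/(2√k)`, `p_k = cos(2β_k)`, `q_k = sin(2β_k)`,
`c_k = cos(γ_k)`, the complex sequence `A_k = (p_k + i·q_k·c_k^{kλ})^k` converges, as
`k → ∞`, to `exp(-1/2 + i·π/2) = i·e^{-1/2}`. Here `c_k^{kλ}` is a real power (rpow). -/
theorem qaoa_amplitude_limit (lam : ℝ) (hlam : 0 < lam) :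
    Tendsto (fun k : ℕ =>
        (((Real.cos (2 * (1 / (2 * Real.sqrt k)))) : ℂ)
          + Complex.I * ((Real.sin (2 * (1 / (2 * Real.sqrt k)))) : ℂ)
            * (((Real.cos (Real.sqrt (Real.log (4 * k / Real.pi ^ 2) / (k * lam))))
                ^ ((k : ℝ) * lam) : ℝ) : ℂ)) ^ k)
      atTop (nhds (Complex.exp (-(1 / 2) + Complex.I * Real.pi / 2))) := by
  have hsqrt : Tendsto (fun k : ℕ => √(k : ℝ)) atTop atTop :=
    tendsto_sqrt_atTop.comp tendsto_natCast_atTop_atTop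
  have hre : Tendsto (fun k : ℕ => (k : ℝ) * (cos (√k)⁻¹ - 1)) atTop (𝓝 (-1 / 2)) :=
    (tendsto_sq_mul_cos_inv_sub_one_atTop.comp hsqrt).congr fun k => by
      rw [Function.comp_apply, sq_sqrt k.cast_nonneg]
  have him : Tendsto (fun k : ℕ => (k : ℝ) * (sin (√k)⁻¹ *
      cos (√(log (4 * k / π ^ 2) / (k * lam))) ^ ((k : ℝ) * lam))) atTop (𝓝 (π / 2)) := by
    have h := (tendsto_mul_sin_inv_atTop.comp hsqrt).mul (QAOA.tendsto_sqrt_mul_cos_gamma_rpow hlam)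
    rw [one_mul] at h
    refine h.congr fun k => ?_
    rw [Function.comp_apply, mul_mul_mul_comm, mul_self_sqrt k.cast_nonneg]
  have hβ : ∀ k : ℕ, 2 * (1 / (2 * √(k : ℝ))) = (√k)⁻¹ := fun k => by ring
  simp only [hβ]
  convert Complex.tendsto_ofReal_add_I_mul_pow_exp hre him using 3
  · push_cast
    ring
  · push_cast
    ring
end
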